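/- arXiv:1309.4315 — 5 statements merged into one kernel-verified Lean document; each statement's English description precedes it below -/
import Mathlib

section
/- Let G be a group, d ≥ 2, and suppose a ⊆ e ⊆ [d] with |a| ≥ 2 and e ∩ [min a; max a] = a. Then L_a is a normal subgroup of H_e. In particular, L_e is normal in H_e. -/
/-- For `e = {i₁ < ... < i_r} ⊆ [d]`, the subgroup `H_e ≤ G^d` of tuples that are constant
on each block `(i_s; i_{s+1}]`.  A tuple `g` lies in `H_e` iff `g i = g j` whenever `i < j`,
no element of `e` lies in `[i; j)`, some element of `e` is `< i`, and some element of `e`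
is `≥ j`; this says exactly that `i` and `j` lie in a common block `(i_s; i_{s+1}]`. -/
def Hgrp (G : Type) [Group G] {d : ℕ} (e : Finset (Fin d)) : Subgroup (Fin d → G) where
  carrier := {g | ∀ i j : Fin d, i < j → (∀ a ∈ e, ¬(i ≤ a ∧ a < j)) →
      (∃ a ∈ e, a < i) → (∃ b ∈ e, j ≤ b) → g i = g j}
  one_mem' := by intro i j _ _ _ _; rfl
  mul_mem' := by
    intro a b ha hb i j h1 h2 h3 h4
    simp only [Pi.mul_apply, ha i j h1 h2 h3 h4, hb i j h1 h2 h3 h4]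
  inv_mem' := by
    intro a ha i j h1 h2 h3 h4
    simp only [Pi.inv_apply, ha i j h1 h2 h3 h4]

/-- For `e = {i₁ < ... < i_r} ⊆ [d]`, the subgroup `L_e ≤ H_e` of tuples that moreover equal
the identity outside `(i₁; i_r]`, i.e. at every coordinate `i` with `i ≤ min e` or `i > max e`. -/
def Lgrp (G : Type) [Group G] {d : ℕ} (e : Finset (Fin d)) : Subgroup (Fin d → G) where
  carrier := {g | g ∈ Hgrp G e ∧
      ∀ i : Fin d, ((∀ a ∈ e, i ≤ a) ∨ (∀ a ∈ e, a < i)) → g i = 1}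
  one_mem' := ⟨(Hgrp G e).one_mem, fun _ _ => rfl⟩
  mul_mem' := by
    rintro a b ⟨haH, ha⟩ ⟨hbH, hb⟩
    exact ⟨mul_mem haH hbH, fun i hi => by simp [ha i hi, hb i hi]⟩
  inv_mem' := by
    rintro a ⟨haH, ha⟩
    exact ⟨inv_mem haH, fun i hi => by simp [ha i hi]⟩

/-- For `e = {i₁ < ... < i_r}`, the subgroup `K ≤ H_e` of tuples that equal the identity on
`(i₁; i_r]`, i.e. at every coordinate `i` with `min e < i ≤ max e`.  Applied to the pair
`{i₁, i_r}` this is the subgroup `K_{{i₁,i_r}}`. -/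
def Kgrp (G : Type) [Group G] {d : ℕ} (e : Finset (Fin d)) : Subgroup (Fin d → G) where
  carrier := {g | g ∈ Hgrp G e ∧
      ∀ i : Fin d, (∃ a ∈ e, a < i) → (∃ b ∈ e, i ≤ b) → g i = 1}
  one_mem' := ⟨(Hgrp G e).one_mem, fun _ _ _ => rfl⟩
  mul_mem' := by
    rintro a b ⟨haH, ha⟩ ⟨hbH, hb⟩
    exact ⟨mul_mem haH hbH, fun i h1 h2 => by simp [ha i h1 h2, hb i h1 h2]⟩
  inv_mem' := by
    rintro a ⟨haH, ha⟩
    exact ⟨inv_mem haH, fun i h1 h2 => by simp [ha i h1 h2]⟩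

lemma Lgrp_conj_key (G : Type) [Group G] {d : ℕ} (a e : Finset (Fin d))
    (hne : a.Nonempty) (hae : a ⊆ e)
    (hcap : ∀ k ∈ e, a.min' hne ≤ k → k ≤ a.max' hne → k ∈ a)
    (h x : Fin d → G) (hh : h ∈ Hgrp G e) (hx : x ∈ Lgrp G a) :
    h * x * h⁻¹ ∈ Lgrp G a := by
  obtain ⟨hxH, hx1⟩ := hx
  constructor
  · intro i j h1 h2 h3 h4
    have hxij := hxH i j h1 h2 h3 h4
    have h2' : ∀ c ∈ e, ¬(i ≤ c ∧ c < j) := by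
      intro c hc ⟨hic, hcj⟩
      obtain ⟨c0, hc0a, hc0i⟩ := h3
      obtain ⟨c1, hc1a, hjc1⟩ := h4
      have : c ∈ a := hcap c hc
        (le_trans (a.min'_le c0 hc0a) (le_of_lt (lt_of_lt_of_le hc0i hic)))
        (le_trans (le_of_lt hcj) (le_trans hjc1 (a.le_max' c1 hc1a)))
      exact h2 c this ⟨hic, hcj⟩
    have h3' : ∃ c ∈ e, c < i := by
      obtain ⟨c0, hc0a, hc0i⟩ := h3; exact ⟨c0, hae hc0a, hc0i⟩
    have h4' : ∃ c ∈ e, j ≤ c := by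
      obtain ⟨c1, hc1a, hjc1⟩ := h4; exact ⟨c1, hae hc1a, hjc1⟩
    have hhij := hh i j h1 h2' h3' h4'
    simp only [Pi.mul_apply, Pi.inv_apply, hxij, hhij]
  · intro i hi
    simp [Pi.mul_apply, Pi.inv_apply, hx1 i hi]

/-- If `a ⊆ e ⊆ [d]` with `|a| ≥ 2` and `e ∩ [min a; max a] = a`, then `L_a` is a normal
subgroup of `H_e`; in particular `L_e` is normal in `H_e`. -/
theorem Lgrp_normal_in_Hgrp (G : Type) [Group G] {d : ℕ} (hd : 2 ≤ d)
    (a e : Finset (Fin d)) (hae : a ⊆ e) (ha : 2 ≤ a.card)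
    (hcap : ({i ∈ e | a.min' (Finset.card_pos.mp (by omega)) ≤ i ∧
        i ≤ a.max' (Finset.card_pos.mp (by omega))} : Finset (Fin d)) = a) :
    (∀ h ∈ Hgrp G e, ∀ x ∈ Lgrp G a, h * x * h⁻¹ ∈ Lgrp G a) ∧
    (∀ h ∈ Hgrp G e, ∀ x ∈ Lgrp G e, h * x * h⁻¹ ∈ Lgrp G e) := by
  have hne : a.Nonempty := Finset.card_pos.mp (by omega)
  have hene : e.Nonempty := hne.mono hae
  constructor
  · intro h hh x hx
    refine Lgrp_conj_key G a e hne hae ?_ h x hh hx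
    intro k hk h1 h2
    have : k ∈ ({i ∈ e | a.min' hne ≤ i ∧ i ≤ a.max' hne} : Finset (Fin d)) :=
      Finset.mem_filter.mpr ⟨hk, h1, h2⟩
    rwa [show a.min' hne = a.min' (Finset.card_pos.mp (by omega)) from rfl, hcap] at this
  · intro h hh x hx
    exact Lgrp_conj_key G e e hene (le_refl e) (fun k hk _ _ => hk) h x hh hx
end

section
/- Let 𝔎₁, 𝔎₂ be closed subspaces of a Hilbert space and 𝔏 ⊆ 𝔎₁ ∩ 𝔎₂ a closed subspace. Then the condition ⟨u, v⟩ = ⟨P_𝔏 u, P_𝔏 v⟩ for all u ∈ 𝔎₁, v ∈ 𝔎₂ is equivalent to: P_{𝔎₂} u = P_𝔏 u for all u ∈ 𝔎₁. -/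
/-!
Since `P_L u ∈ L ⊆ K₂`, the characterization of orthogonal projections gives `P_{K₂} u = P_L u`
iff `u - P_L u ⊥ K₂`; and `⟪u - P_L u, v⟫ = ⟪u, v⟫ - ⟪P_L u, P_L v⟫` because `P_L` is
self-adjoint and idempotent. So the equivalence holds pointwise in `u`.
-/

open scoped InnerProductSpace

namespace Submodule

variable {𝕜 E : Type*} [RCLike 𝕜] [NormedAddCommGroup E] [InnerProductSpace 𝕜 E]

theorem starProjection_eq_iff_inner_sub_eq_zero {K : Submodule 𝕜 E} [K.HasOrthogonalProjection]
    {u v : E} (hv : v ∈ K) : K.starProjection u = v ↔ ∀ w ∈ K, ⟪u - v, w⟫_𝕜 = 0 := by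
  constructor
  · rintro rfl w hw
    exact K.starProjection_inner_eq_zero u w hw
  · exact K.eq_starProjection_of_mem_of_inner_eq_zero hv

theorem inner_starProjection_starProjection (K : Submodule 𝕜 E) [K.HasOrthogonalProjection]
    (u v : E) : ⟪K.starProjection u, K.starProjection v⟫_𝕜 = ⟪K.starProjection u, v⟫_𝕜 := by
  rw [← K.inner_starProjection_left_eq_right, K.starProjection_eq_self_iff.mpr
    (K.starProjection_apply_mem u)]

theorem starProjection_eq_starProjection_iff_inner_eq {K L : Submodule 𝕜 E}
    [K.HasOrthogonalProjection] [L.HasOrthogonalProjection] (hLK : L ≤ K) (u : E) :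
    K.starProjection u = L.starProjection u ↔
      ∀ v ∈ K, ⟪u, v⟫_𝕜 = ⟪L.starProjection u, L.starProjection v⟫_𝕜 := by
  rw [starProjection_eq_iff_inner_sub_eq_zero (hLK (L.starProjection_apply_mem u))]
  refine forall₂_congr fun v _ => ?_
  rw [inner_sub_left, inner_starProjection_starProjection, sub_eq_zero]

end Submodule

theorem relatively_orthogonal_iff_proj_eq_general {H : Type} [NormedAddCommGroup H]
    [InnerProductSpace ℝ H]
    (K₁ K₂ L : Submodule ℝ H) [CompleteSpace K₂] [CompleteSpace L]
    (hL : L ≤ K₁ ⊓ K₂) :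
    (∀ u ∈ K₁, ∀ v ∈ K₂,
      ⟪u, v⟫_ℝ = ⟪(Submodule.orthogonalProjectionOnto L u : H), (Submodule.orthogonalProjectionOnto L v : H)⟫_ℝ) ↔
    (∀ u ∈ K₁, (Submodule.orthogonalProjectionOnto K₂ u : H) = (Submodule.orthogonalProjectionOnto L u : H)) :=
  forall₂_congr fun u _ =>
    (Submodule.starProjection_eq_starProjection_iff_inner_eq (hL.trans inf_le_right) u).symm

/-- For closed subspaces `K₁`, `K₂` of a Hilbert space and a closed subspace `L ⊆ K₁ ∩ K₂`,
relative orthogonality of `K₁` and `K₂` over `L` (i.e. `⟪u,v⟫ = ⟪P_L u, P_L v⟫` for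
`u ∈ K₁`, `v ∈ K₂`) is equivalent to `P_{K₂} u = P_L u` for all `u ∈ K₁`. -/
theorem relatively_orthogonal_iff_proj_eq {H : Type} [NormedAddCommGroup H]
    [InnerProductSpace ℝ H] [CompleteSpace H]
    (K₁ K₂ L : Submodule ℝ H) [CompleteSpace K₁] [CompleteSpace K₂] [CompleteSpace L]
    (hL : L ≤ K₁ ⊓ K₂) :
    (∀ u ∈ K₁, ∀ v ∈ K₂,
      ⟪u, v⟫_ℝ = ⟪(Submodule.orthogonalProjectionOnto L u : H), (Submodule.orthogonalProjectionOnto L v : H)⟫_ℝ) ↔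
    (∀ u ∈ K₁, (Submodule.orthogonalProjectionOnto K₂ u : H) = (Submodule.orthogonalProjectionOnto L u : H)) :=
  relatively_orthogonal_iff_proj_eq_general K₁ K₂ L hL
end

section
/- Let G be a countable group and 𝖵 a functorial L²-subspace of G-systems. If π: X̃ → X is a relatively 𝖵-sated G-extension and α: Z → X̃ is any further G-extension, then the composite π ∘ α: Z → X is also relatively 𝖵-sated. -/
open scoped InnerProductSpace

open MeasureTheory

/-- A probability-preserving `G`-system on a standard Borel probability space. -/
structure PPSystem (G : Type) [Group G] : Type 1 where
  /-- the underlying point space -/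
  X : Type
  /-- the σ-algebra -/
  mX : MeasurableSpace X
  /-- the space is standard Borel -/
  sb : @StandardBorelSpace X mX
  /-- the invariant probability measure -/
  μ : @Measure X mX
  prob : @IsProbabilityMeasure X mX μ
  /-- the action -/
  T : G → X → X
  hmp : ∀ g, @MeasurePreserving X X mX mX (T g) μ μ
  h1 : T 1 = id
  hmul : ∀ g h : G, T (g * h) = T g ∘ T h

instance {G : Type} [Group G] (S : PPSystem G) : MeasurableSpace S.X := S.mX
instance {G : Type} [Group G] (S : PPSystem G) : StandardBorelSpace S.X := S.sb
instance {G : Type} [Group G] (S : PPSystem G) : IsProbabilityMeasure S.μ := S.prob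

/-- `π` is a factor map (extension) from the `G`-system `Y` onto the `G`-system `X`:
it is measure-preserving and intertwines the actions almost everywhere. -/
def IsFactorMap {G : Type} [Group G] (Y X : PPSystem G) (π : Y.X → X.X) : Prop :=
  MeasurePreserving π Y.μ X.μ ∧ ∀ g : G, ∀ᵐ y ∂Y.μ, π (Y.T g y) = X.T g (π y)

/-- Pulling an `L²` function back along a measure-preserving map, as a linear map. -/
noncomputable def pullback {G : Type} [Group G] (Y X : PPSystem G) (π : Y.X → X.X)
    (hπ : MeasurePreserving π Y.μ X.μ) : Lp ℝ 2 X.μ →ₗ[ℝ] Lp ℝ 2 Y.μ :=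
  Lp.compMeasurePreservingₗ ℝ π hπ

/-- A functorial `L²`-subspace of `G`-systems: an assignment to each system `X` of a closed
subspace `𝖵_X ≤ L²(μ_X)`, such that `𝖵_X ∘ π ⊆ 𝖵_Y` for every factor map `π : Y → X`. -/
structure FunctorialSubspace (G : Type) [Group G] : Type 1 where
  /-- the subspace assigned to each system -/
  V : (X : PPSystem G) → Submodule ℝ (Lp ℝ 2 X.μ)
  closed : ∀ X : PPSystem G, IsClosed (V X : Set (Lp ℝ 2 X.μ))
  mono : ∀ (Y X : PPSystem G) (π : Y.X → X.X) (hπ : IsFactorMap Y X π)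
    (f : Lp ℝ 2 X.μ), f ∈ V X → pullback Y X π hπ.1 f ∈ V Y

/-- `K₁` and `K₂` are relatively orthogonal over `L`: `⟪u, v⟫ = ⟪P_L u, P_L v⟫` for all
`u ∈ K₁`, `v ∈ K₂`.  The orthogonal projection `P_L u` is characterized by `P_L u ∈ L`
together with `u - P_L u ⟂ L`, which is how it is phrased here. -/
def RelOrthOver {E : Type} [NormedAddCommGroup E] [InnerProductSpace ℝ E]
    (K₁ K₂ L : Submodule ℝ E) : Prop :=
  ∀ u ∈ K₁, ∀ v ∈ K₂, ∀ pu ∈ L, ∀ pv ∈ L,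
    (∀ w ∈ L, ⟪u - pu, w⟫_ℝ = 0) → (∀ w ∈ L, ⟪v - pv, w⟫_ℝ = 0) →
    ⟪u, v⟫_ℝ = ⟪pu, pv⟫_ℝ

/-- A system `X` is `𝖵`-sated if for every extension `ξ : Y → X`, the subspaces
`L²(μ_X) ∘ ξ` and `𝖵_Y` of `L²(μ_Y)` are relatively orthogonal over `𝖵_X ∘ ξ`. -/
def IsSated {G : Type} [Group G] (𝕍 : FunctorialSubspace G) (X : PPSystem G) : Prop :=
  ∀ (Y : PPSystem G) (ξ : Y.X → X.X) (hξ : IsFactorMap Y X ξ),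
    RelOrthOver (LinearMap.range (pullback Y X ξ hξ.1)) (𝕍.V Y)
      ((𝕍.V X).map (pullback Y X ξ hξ.1))

/-- An extension `π : X̃ → X` is relatively `𝖵`-sated if for every further extension
`ξ : Y → X̃`, the subspaces `L²(μ_X) ∘ (π ∘ ξ)` and `𝖵_Y` are relatively orthogonal
over `𝖵_{X̃} ∘ ξ`. -/
def IsRelSated {G : Type} [Group G] (𝕍 : FunctorialSubspace G) (Xt X : PPSystem G)
    (π : Xt.X → X.X) (hπ : MeasurePreserving π Xt.μ X.μ) : Prop :=
  ∀ (Y : PPSystem G) (ξ : Y.X → Xt.X) (hξ : IsFactorMap Y Xt ξ),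
    RelOrthOver (LinearMap.range (pullback Y X (π ∘ ξ) (hπ.comp hξ.1))) (𝕍.V Y)
      ((𝕍.V Xt).map (pullback Y Xt ξ hξ.1))

/-! Let `L' = 𝖵_{X̃} ∘ (α ∘ ξ)` and `L = 𝖵_Z ∘ ξ`, so that `L' ≤ L ≤ 𝖵_Y`, and let `P'` be the
projection onto `L'`. Relative satedness of `π` says `⟪u, v⟫ = ⟪P' u, v⟫` for every `u` pulled
back from `X` and every `v ∈ 𝖵_Y`. If `pu, pv` are the projections of `u, v` onto `L`, then,
since `P' u ∈ L` and `pv ∈ 𝖵_Y`,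
`⟪u, v⟫ = ⟪P' u, v⟫ = ⟪P' u, pv⟫ = ⟪u, pv⟫ = ⟪pu, pv⟫`. -/

section RelOrthOver

variable {E : Type} [NormedAddCommGroup E] [InnerProductSpace ℝ E] {K₁ K₂ L : Submodule ℝ E}

theorem RelOrthOver.inner_eq_inner_starProjection [L.HasOrthogonalProjection]
    (h : RelOrthOver K₁ K₂ L) {u v : E} (hu : u ∈ K₁) (hv : v ∈ K₂) :
    ⟪u, v⟫_ℝ = ⟪L.starProjection u, v⟫_ℝ := by
  have hPv : ⟪L.starProjection u, v - L.starProjection v⟫_ℝ = 0 := by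
    rw [real_inner_comm]
    exact L.starProjection_inner_eq_zero v _ (L.starProjection_apply_mem u)
  rw [inner_sub_right, sub_eq_zero] at hPv
  rw [hPv]
  exact h u hu v hv _ (L.starProjection_apply_mem u) _ (L.starProjection_apply_mem v)
    (L.starProjection_inner_eq_zero u) (L.starProjection_inner_eq_zero v)

theorem RelOrthOver.of_le {L' : Submodule ℝ E} [L'.HasOrthogonalProjection]
    (h : RelOrthOver K₁ K₂ L') (hL' : L' ≤ L) (hL : L ≤ K₂) : RelOrthOver K₁ K₂ L := by
  intro u hu v hv pu hpu pv hpv hu_orth hv_orth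
  have hv_pv : ⟪L'.starProjection u, v⟫_ℝ = ⟪L'.starProjection u, pv⟫_ℝ := by
    have := hv_orth _ (hL' (L'.starProjection_apply_mem u))
    rwa [real_inner_comm, inner_sub_right, sub_eq_zero] at this
  have hu_pu : ⟪u, pv⟫_ℝ = ⟪pu, pv⟫_ℝ := by
    have := hu_orth pv hpv
    rwa [inner_sub_left, sub_eq_zero] at this
  calc ⟪u, v⟫_ℝ = ⟪L'.starProjection u, v⟫_ℝ := h.inner_eq_inner_starProjection hu hv
    _ = ⟪L'.starProjection u, pv⟫_ℝ := hv_pv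
    _ = ⟪u, pv⟫_ℝ := (h.inner_eq_inner_starProjection hu (hL hpv)).symm
    _ = ⟪pu, pv⟫_ℝ := hu_pu

end RelOrthOver

section Systems

variable {G : Type} [Group G] {X Y Z : PPSystem G}

theorem IsFactorMap.comp {α : Y.X → X.X} {β : Z.X → Y.X} (hα : IsFactorMap Y X α)
    (hβ : IsFactorMap Z Y β) : IsFactorMap Z X (α ∘ β) := by
  refine ⟨hα.1.comp hβ.1, fun g => ?_⟩
  filter_upwards [hβ.2 g, hβ.1.quasiMeasurePreserving.ae (hα.2 g)] with z hβz hαz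
  simp only [Function.comp_apply, hβz, hαz]

theorem pullback_comp_apply {α : Y.X → X.X} {β : Z.X → Y.X} (hα : MeasurePreserving α Y.μ X.μ)
    (hβ : MeasurePreserving β Z.μ Y.μ) (f : Lp ℝ 2 X.μ) :
    pullback Z X (α ∘ β) (hα.comp hβ) f = pullback Z Y β hβ (pullback Y X α hα f) :=
  Lp.compMeasurePreserving_comp_apply f hα hβ

namespace FunctorialSubspace

variable (𝕍 : FunctorialSubspace G)

instance hasOrthogonalProjection_map_pullback (π : Y.X → X.X)
    (hπ : MeasurePreserving π Y.μ X.μ) :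
    ((𝕍.V X).map (pullback Y X π hπ)).HasOrthogonalProjection :=
  haveI := (𝕍.closed X).completeSpace_coe
  haveI : CompleteSpace ((𝕍.V X).map (pullback Y X π hπ)) :=
    LinearIsometry.completeSpace_map (Lp.compMeasurePreservingₗᵢ ℝ π hπ) (𝕍.V X)
  Submodule.HasOrthogonalProjection.ofCompleteSpace _

theorem map_pullback_le {π : Y.X → X.X} (hπ : IsFactorMap Y X π) :
    (𝕍.V X).map (pullback Y X π hπ.1) ≤ 𝕍.V Y := by
  rintro _ ⟨f, hf, rfl⟩
  exact 𝕍.mono Y X π hπ f hf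

theorem map_pullback_comp_le {α : Y.X → X.X} {β : Z.X → Y.X} (hα : IsFactorMap Y X α)
    (hβ : MeasurePreserving β Z.μ Y.μ) :
    (𝕍.V X).map (pullback Z X (α ∘ β) (hα.1.comp hβ)) ≤ (𝕍.V Y).map (pullback Z Y β hβ) := by
  rintro _ ⟨f, hf, rfl⟩
  exact ⟨pullback Y X α hα.1 f, 𝕍.mono Y X α hα f hf, (pullback_comp_apply hα.1 hβ f).symm⟩

end FunctorialSubspace

end Systems

theorem relSated_comp_general {G : Type} [Group G] (𝕍 : FunctorialSubspace G)
    (Xt X Z : PPSystem G) (π : Xt.X → X.X) (hπ : IsFactorMap Xt X π)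
    (hsat : IsRelSated 𝕍 Xt X π hπ.1)
    (α : Z.X → Xt.X) (hα : IsFactorMap Z Xt α) :
    IsRelSated 𝕍 Z X (π ∘ α) (hπ.1.comp hα.1) := by
  intro Y ξ hξ
  exact (hsat Y (α ∘ ξ) (hα.comp hξ)).of_le (𝕍.map_pullback_comp_le hα hξ.1)
    (𝕍.map_pullback_le hξ)

/-- If `π : X̃ → X` is a relatively `𝖵`-sated extension and `α : Z → X̃` is a further
extension, then `π ∘ α : Z → X` is also relatively `𝖵`-sated. -/
theorem relSated_comp {G : Type} [Group G] [Countable G] (𝕍 : FunctorialSubspace G)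
    (Xt X Z : PPSystem G) (π : Xt.X → X.X) (hπ : IsFactorMap Xt X π)
    (hsat : IsRelSated 𝕍 Xt X π hπ.1)
    (α : Z.X → Xt.X) (hα : IsFactorMap Z Xt α) :
    IsRelSated 𝕍 Z X (π ∘ α) (hπ.1.comp hα.1) :=
  relSated_comp_general 𝕍 Xt X Z π hπ hsat α hα
end

section
/- Let G be a countable amenable group with Følner sequence (F_n), (X, μ) a probability space, and (u_g)_{g∈G} a bounded family in L²(μ) (say ‖u_g‖ ≤ 1 for all g). Then limsup_n ‖(1/|F_n|) Σ_{g∈F_n} u_g‖² ≤ limsup_m (1/|F_m|²) Σ_{h,k ∈ F_m} limsup_n |(1/|F_n|) Σ_{g∈F_n} ⟨u_{hg}, u_{kg}⟩|. -/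
/-!
Fix a finite nonempty `t ⊆ G` and replace `u` by the averages `v g = |t|⁻¹ ∑_{h ∈ t} u (h g)`.
Since `∑_{g ∈ F_n} u (h g)` differs from `∑_{g ∈ F_n} u g` by at most `|h F_n ∆ F_n|` terms, the
Følner property makes the averages of `u` and of `v` over `F_n` asymptotically equal. By
Cauchy–Schwarz, `‖|F_n|⁻¹ ∑_{g ∈ F_n} v g‖²` is at most `|F_n|⁻¹ ∑_{g ∈ F_n} ‖v g‖²`, and expanding
`‖v g‖²` gives `|t|⁻² ∑_{h,k ∈ t} |F_n|⁻¹ ∑_{g ∈ F_n} ⟪u (h g), u (k g)⟫`. Taking `t = F_m` for every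
`m` yields the estimate.
-/

open Filter Finset Topology
open scoped symmDiff InnerProductSpace

section Limsup

variable {α ι : Type*} {l : Filter α}

lemma limsup_finsetSum_le [l.NeBot] (s : Finset ι) {f : ι → α → ℝ}
    (hle : ∀ i ∈ s, IsBoundedUnder (· ≤ ·) l (f i))
    (hge : ∀ i ∈ s, IsBoundedUnder (· ≥ ·) l (f i)) :
    limsup (fun x => ∑ i ∈ s, f i x) l ≤ ∑ i ∈ s, limsup (f i) l := by
  classical
  induction s using Finset.induction_on with
  | empty => simp
  | insert i s hi ih =>
    rw [forall_mem_insert] at hle hge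
    simp only [sum_insert hi]
    have hsum_le := isBoundedUnder_le_sum s hle.2
    have hsum_ge := isBoundedUnder_ge_sum s hge.2
    rw [sum_fn] at hsum_le hsum_ge
    exact (limsup_add_le hge.1 hle.1 hsum_ge.isCoboundedUnder_le hsum_le).trans
      (add_le_add le_rfl (ih hle.2 hge.2))

lemma limsup_const_mul_of_nonneg [l.NeBot] {c : ℝ} (hc : 0 ≤ c) {f : α → ℝ}
    (hle : IsBoundedUnder (· ≤ ·) l f) (hcobdd : IsCoboundedUnder (· ≤ ·) l f) :
    limsup (fun x => c * f x) l = c * limsup f l :=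
  ((monotone_mul_left_of_nonneg hc).map_limsup_of_continuousAt f
    (continuous_const_mul c).continuousAt hle hcobdd).symm

lemma limsup_le_limsup_of_tendsto_sub [l.NeBot] {f g : α → ℝ} (hfg : Tendsto (f - g) l (𝓝 0))
    (hle : IsBoundedUnder (· ≤ ·) l g) (hcobdd : IsCoboundedUnder (· ≤ ·) l g) :
    limsup f l ≤ limsup g l :=
  calc limsup f l = limsup (f - g + g) l := by rw [sub_add_cancel]
    _ ≤ limsup (f - g) l + limsup g l :=
      limsup_add_le hfg.isBoundedUnder_ge hfg.isBoundedUnder_le hcobdd hle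
    _ = limsup g l := by rw [hfg.limsup_eq, zero_add]

lemma limsup_const_mul_sum_sum_le {κ : Type*} [l.NeBot] {c : ℝ} (hc : 0 ≤ c) (s : Finset ι)
    (t : Finset κ) {f : ι → κ → α → ℝ}
    (hle : ∀ i ∈ s, ∀ j ∈ t, IsBoundedUnder (· ≤ ·) l (f i j))
    (hge : ∀ i ∈ s, ∀ j ∈ t, IsBoundedUnder (· ≥ ·) l (f i j)) :
    limsup (fun x => c * ∑ i ∈ s, ∑ j ∈ t, f i j x) l ≤
      c * ∑ i ∈ s, ∑ j ∈ t, limsup (f i j) l := by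
  have hsum_le : ∀ i ∈ s, IsBoundedUnder (· ≤ ·) l (fun x => ∑ j ∈ t, f i j x) := fun i hi => by
    simpa only [sum_fn] using isBoundedUnder_le_sum t (hle i hi)
  have hsum_ge : ∀ i ∈ s, IsBoundedUnder (· ≥ ·) l (fun x => ∑ j ∈ t, f i j x) := fun i hi => by
    simpa only [sum_fn] using isBoundedUnder_ge_sum t (hge i hi)
  have hdouble_le : IsBoundedUnder (· ≤ ·) l (fun x => ∑ i ∈ s, ∑ j ∈ t, f i j x) := by
    simpa only [sum_fn] using isBoundedUnder_le_sum s hsum_le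
  have hdouble_ge : IsBoundedUnder (· ≥ ·) l (fun x => ∑ i ∈ s, ∑ j ∈ t, f i j x) := by
    simpa only [sum_fn] using isBoundedUnder_ge_sum s hsum_ge
  rw [limsup_const_mul_of_nonneg hc hdouble_le hdouble_ge.isCoboundedUnder_le]
  gcongr
  exact (limsup_finsetSum_le s hsum_le hsum_ge).trans
    (sum_le_sum fun i hi => limsup_finsetSum_le t (hle i hi) (hge i hi))

end Limsup

section Averages

variable {ι E : Type*} [SeminormedAddCommGroup E]

lemma abs_norm_sq_sub_norm_sq_le {x y : E} (hx : ‖x‖ ≤ 1) (hy : ‖y‖ ≤ 1) :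
    |‖x‖ ^ 2 - ‖y‖ ^ 2| ≤ 2 * ‖x - y‖ := by
  rw [sq_sub_sq, abs_mul, abs_of_nonneg (by positivity)]
  exact mul_le_mul (by linarith) (abs_norm_sub_norm_le x y) (abs_nonneg _) zero_le_two

lemma norm_sum_sub_sum_le_card_symmDiff [DecidableEq ι] {u : ι → E} (hu : ∀ i, ‖u i‖ ≤ 1)
    (s t : Finset ι) : ‖∑ i ∈ s, u i - ∑ i ∈ t, u i‖ ≤ #(s ∆ t) := by
  have hnorm_sum_le : ∀ r : Finset ι, ‖∑ i ∈ r, u i‖ ≤ #r := fun r => by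
    simpa using norm_sum_le_of_le r fun i _ => hu i
  rw [← sum_sdiff_sub_sum_sdiff, symmDiff_def, sup_eq_union,
    card_union_of_disjoint disjoint_sdiff_sdiff, Nat.cast_add]
  exact (norm_sub_le _ _).trans (add_le_add (hnorm_sum_le _) (hnorm_sum_le _))

lemma norm_smul_sum_sq [InnerProductSpace ℝ E] (c : ℝ) (t : Finset ι) (w : ι → E) :
    ‖c • ∑ i ∈ t, w i‖ ^ 2 = c ^ 2 * ∑ i ∈ t, ∑ j ∈ t, ⟪w i, w j⟫_ℝ := by
  rw [← real_inner_self_eq_norm_sq, real_inner_smul_left, real_inner_smul_right, sum_inner]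
  simp only [inner_sum]
  ring

lemma inv_card_sq_mul_sum_sum_le_one (t : Finset ι) {a : ι → ι → ℝ}
    (ha : ∀ i ∈ t, ∀ j ∈ t, a i j ≤ 1) : ((#t : ℝ) ^ 2)⁻¹ * ∑ i ∈ t, ∑ j ∈ t, a i j ≤ 1 := by
  refine inv_mul_le_one_of_le₀ ?_ (by positivity)
  calc ∑ i ∈ t, ∑ j ∈ t, a i j ≤ ∑ _i ∈ t, ∑ _j ∈ t, (1 : ℝ) :=
        sum_le_sum fun i hi => sum_le_sum fun j hj => ha i hi j hj
    _ = (#t : ℝ) ^ 2 := by simp [sq]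

variable [NormedSpace ℝ E]

lemma norm_inv_card_smul_sum_le (s : Finset ι) {w : ι → E} {C : ℝ} (hC : 0 ≤ C)
    (hw : ∀ i ∈ s, ‖w i‖ ≤ C) : ‖(#s : ℝ)⁻¹ • ∑ i ∈ s, w i‖ ≤ C := by
  rcases s.eq_empty_or_nonempty with rfl | hs
  · simpa using hC
  rw [norm_smul, norm_inv, Real.norm_natCast, inv_mul_le_iff₀ (by exact_mod_cast hs.card_pos)]
  simpa using norm_sum_le_of_le s hw

lemma norm_inv_card_smul_sum_sq_le (s : Finset ι) (w : ι → E) :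
    ‖(#s : ℝ)⁻¹ • ∑ i ∈ s, w i‖ ^ 2 ≤ (#s : ℝ)⁻¹ * ∑ i ∈ s, ‖w i‖ ^ 2 :=
  calc ‖(#s : ℝ)⁻¹ • ∑ i ∈ s, w i‖ ^ 2 = (#s : ℝ)⁻¹ ^ 2 * ‖∑ i ∈ s, w i‖ ^ 2 := by
        rw [norm_smul, mul_pow, norm_inv, Real.norm_natCast]
    _ ≤ (#s : ℝ)⁻¹ ^ 2 * (#s * ∑ i ∈ s, ‖w i‖ ^ 2) := by
        gcongr
        exact (pow_le_pow_left₀ (norm_nonneg _) (norm_sum_le _ _) 2).trans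
          sq_sum_le_card_mul_sum_sq
    _ = (#s : ℝ)⁻¹ * ∑ i ∈ s, ‖w i‖ ^ 2 := by field_simp

end Averages

section Shift

variable {G E : Type*} [Group G] [SeminormedAddCommGroup E]

noncomputable def shiftAverage [Module ℝ E] (t : Finset G) (u : G → E) (g : G) : E :=
  (#t : ℝ)⁻¹ • ∑ h ∈ t, u (h * g)

lemma norm_avg_sub_avg_shiftAverage_le [DecidableEq G] [NormedSpace ℝ E] {u : G → E}
    (hu : ∀ g, ‖u g‖ ≤ 1) (s : Finset G) {t : Finset G} (ht : t.Nonempty) :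
    ‖(#s : ℝ)⁻¹ • ∑ g ∈ s, u g - (#s : ℝ)⁻¹ • ∑ g ∈ s, shiftAverage t u g‖ ≤
      (#t : ℝ)⁻¹ * ∑ h ∈ t, (#((s.image (h * ·)) ∆ s) : ℝ) / #s := by
  have hct : (#t : ℝ) ≠ 0 := by exact_mod_cast ht.card_pos.ne'
  have hsum_shift : ∑ g ∈ s, shiftAverage t u g =
      (#t : ℝ)⁻¹ • ∑ h ∈ t, ∑ x ∈ s.image (h * ·), u x := by
    simp only [shiftAverage, ← smul_sum]
    rw [sum_comm]
    exact congrArg _ (sum_congr rfl fun h _ => (sum_image (by simp)).symm)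
  have hsum_const : ∑ g ∈ s, u g = (#t : ℝ)⁻¹ • ∑ _h ∈ t, ∑ g ∈ s, u g := by
    rw [sum_const, ← Nat.cast_smul_eq_nsmul ℝ, smul_smul, inv_mul_cancel₀ hct, one_smul]
  calc ‖(#s : ℝ)⁻¹ • ∑ g ∈ s, u g - (#s : ℝ)⁻¹ • ∑ g ∈ s, shiftAverage t u g‖
      = (#s : ℝ)⁻¹ * ((#t : ℝ)⁻¹ *
          ‖∑ h ∈ t, (∑ g ∈ s, u g - ∑ x ∈ s.image (h * ·), u x)‖) := by
        rw [hsum_shift, ← smul_sub, hsum_const, ← smul_sub, ← sum_sub_distrib, norm_smul,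
          norm_smul, norm_inv, norm_inv, Real.norm_natCast, Real.norm_natCast, ← hsum_const]
    _ ≤ (#s : ℝ)⁻¹ * ((#t : ℝ)⁻¹ * ∑ h ∈ t, (#((s.image (h * ·)) ∆ s) : ℝ)) := by
        gcongr
        refine norm_sum_le_of_le t fun h _ => ?_
        rw [symmDiff_comm]
        exact norm_sum_sub_sum_le_card_symmDiff hu _ _
    _ = (#t : ℝ)⁻¹ * ∑ h ∈ t, (#((s.image (h * ·)) ∆ s) : ℝ) / #s := by
        simp only [div_eq_mul_inv, ← sum_mul]
        ring

lemma norm_sq_avg_shiftAverage_le [InnerProductSpace ℝ E] (u : G → E) (s t : Finset G) :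
    ‖(#s : ℝ)⁻¹ • ∑ g ∈ s, shiftAverage t u g‖ ^ 2 ≤
      ((#t : ℝ) ^ 2)⁻¹ * ∑ h ∈ t, ∑ k ∈ t, |(#s : ℝ)⁻¹ * ∑ g ∈ s, ⟪u (h * g), u (k * g)⟫_ℝ| :=
  calc ‖(#s : ℝ)⁻¹ • ∑ g ∈ s, shiftAverage t u g‖ ^ 2
      ≤ (#s : ℝ)⁻¹ * ∑ g ∈ s, ‖shiftAverage t u g‖ ^ 2 := norm_inv_card_smul_sum_sq_le s _
    _ = ((#t : ℝ) ^ 2)⁻¹ * ∑ h ∈ t, ∑ k ∈ t, (#s : ℝ)⁻¹ * ∑ g ∈ s, ⟪u (h * g), u (k * g)⟫_ℝ := by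
        simp only [shiftAverage, norm_smul_sum_sq, ← mul_sum]
        rw [sum_comm]
        simp only [sum_comm (s := s), inv_pow]
        ring
    _ ≤ _ := by gcongr; exact le_abs_self _

end Shift

lemma abs_inv_card_mul_sum_inner_le_one {G E : Type*} [Mul G] [SeminormedAddCommGroup E]
    [InnerProductSpace ℝ E] {u : G → E} (hu : ∀ g, ‖u g‖ ≤ 1) (s : Finset G) (h k : G) :
    |(#s : ℝ)⁻¹ * ∑ g ∈ s, ⟪u (h * g), u (k * g)⟫_ℝ| ≤ 1 := by
  simpa only [Real.norm_eq_abs, smul_eq_mul] using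
    norm_inv_card_smul_sum_le (E := ℝ) s zero_le_one fun g _ =>
      (abs_real_inner_le_norm _ _).trans (mul_le_one₀ (hu (h * g)) (norm_nonneg _) (hu (k * g)))

theorem limsup_norm_sq_avg_le_of_foelner {G E : Type*} [Group G] [DecidableEq G]
    [SeminormedAddCommGroup E] [InnerProductSpace ℝ E] (F : ℕ → Finset G)
    (hFol : ∀ g : G, Tendsto (fun n => (#(((F n).image (g * ·)) ∆ F n) : ℝ) / #(F n))
      atTop (𝓝 0))
    {u : G → E} (hu : ∀ g, ‖u g‖ ≤ 1) {t : Finset G} (ht : t.Nonempty) :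
    limsup (fun n => ‖(#(F n) : ℝ)⁻¹ • ∑ g ∈ F n, u g‖ ^ 2) atTop ≤
      ((#t : ℝ) ^ 2)⁻¹ * ∑ h ∈ t, ∑ k ∈ t,
        limsup (fun n => |(#(F n) : ℝ)⁻¹ * ∑ g ∈ F n, ⟪u (h * g), u (k * g)⟫_ℝ|) atTop := by
  set a : G → G → ℕ → ℝ := fun h k n => |(#(F n) : ℝ)⁻¹ * ∑ g ∈ F n, ⟪u (h * g), u (k * g)⟫_ℝ|
  have ha_le : ∀ h k, IsBoundedUnder (· ≤ ·) atTop (a h k) := fun h k =>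
    isBoundedUnder_of ⟨1, fun n => abs_inv_card_mul_sum_inner_le_one hu _ h k⟩
  have ha_ge : ∀ h k, IsBoundedUnder (· ≥ ·) atTop (a h k) := fun h k =>
    isBoundedUnder_of ⟨0, fun n => abs_nonneg _⟩
  have hnorm_le : ∀ n, ‖(#(F n) : ℝ)⁻¹ • ∑ g ∈ F n, shiftAverage t u g‖ ≤ 1 := fun n =>
    norm_inv_card_smul_sum_le _ zero_le_one fun g _ =>
      norm_inv_card_smul_sum_le _ zero_le_one fun h _ => hu _
  have hfolner : Tendsto (fun n => (#t : ℝ)⁻¹ * ∑ h ∈ t,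
      (#(((F n).image (h * ·)) ∆ F n) : ℝ) / #(F n)) atTop (𝓝 0) := by
    simpa using (tendsto_finsetSum t fun h _ => hFol h).const_mul (#t : ℝ)⁻¹
  have hsq_sub : Tendsto (fun n => ‖(#(F n) : ℝ)⁻¹ • ∑ g ∈ F n, u g‖ ^ 2 -
      ‖(#(F n) : ℝ)⁻¹ • ∑ g ∈ F n, shiftAverage t u g‖ ^ 2) atTop (𝓝 0) := by
    refine squeeze_zero_norm (fun n => (abs_norm_sq_sub_norm_sq_le
      (norm_inv_card_smul_sum_le _ zero_le_one fun g _ => hu g) (hnorm_le n)).trans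
      (mul_le_mul_of_nonneg_left (norm_avg_sub_avg_shiftAverage_le hu _ ht) zero_le_two)) ?_
    simpa using hfolner.const_mul 2
  calc limsup (fun n => ‖(#(F n) : ℝ)⁻¹ • ∑ g ∈ F n, u g‖ ^ 2) atTop
      ≤ limsup (fun n => ‖(#(F n) : ℝ)⁻¹ • ∑ g ∈ F n, shiftAverage t u g‖ ^ 2) atTop :=
        limsup_le_limsup_of_tendsto_sub hsq_sub
          (isBoundedUnder_of ⟨1, fun n => pow_le_one₀ (norm_nonneg _) (hnorm_le n)⟩)
          (isBoundedUnder_of ⟨0, fun n => sq_nonneg _⟩).isCoboundedUnder_le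
    _ ≤ limsup (fun n => ((#t : ℝ) ^ 2)⁻¹ * ∑ h ∈ t, ∑ k ∈ t, a h k n) atTop := by
        exact limsup_le_limsup (Eventually.of_forall fun n => norm_sq_avg_shiftAverage_le u _ t)
          (isBoundedUnder_of ⟨0, fun n => sq_nonneg _⟩).isCoboundedUnder_le
          (isBoundedUnder_of ⟨1, fun n => inv_card_sq_mul_sum_sum_le_one t fun h _ k _ =>
            abs_inv_card_mul_sum_inner_le_one hu _ h k⟩)
    _ ≤ ((#t : ℝ) ^ 2)⁻¹ * ∑ h ∈ t, ∑ k ∈ t, limsup (a h k) atTop :=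
        limsup_const_mul_sum_sum_le (by positivity) t t (fun h _ k _ => ha_le h k)
          fun h _ k _ => ha_ge h k

theorem van_der_corput_amenable_general {G : Type} [Group G] [DecidableEq G]
    {H : Type} [NormedAddCommGroup H] [InnerProductSpace ℝ H]
    (F : ℕ → Finset G) (hFne : ∀ n, (F n).Nonempty)
    (hFol : ∀ g : G, Tendsto
      (fun n => ((((F n).image (fun x => g * x)) ∆ (F n)).card : ℝ) / (F n).card)
      atTop (nhds 0))
    (u : G → H) (hu : ∀ g, ‖u g‖ ≤ 1) :
    limsup (fun n => ‖((F n).card : ℝ)⁻¹ • ∑ g ∈ F n, u g‖ ^ 2) atTop ≤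
    limsup (fun m => (((F m).card : ℝ) ^ 2)⁻¹ *
      ∑ h ∈ F m, ∑ k ∈ F m,
        limsup (fun n => |((F n).card : ℝ)⁻¹ * ∑ g ∈ F n, ⟪u (h * g), u (k * g)⟫_ℝ|) atTop)
      atTop := by
  have hcorrelation_le_one : ∀ h k : G,
      limsup (fun n => |((F n).card : ℝ)⁻¹ * ∑ g ∈ F n, ⟪u (h * g), u (k * g)⟫_ℝ|) atTop ≤ 1 :=
    fun h k => limsup_le_of_le (isBoundedUnder_of ⟨0, fun n => abs_nonneg _⟩).isCoboundedUnder_le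
      (Eventually.of_forall fun n => abs_inv_card_mul_sum_inner_le_one hu _ h k)
  exact le_limsup_of_frequently_le
    (Frequently.of_forall fun m => limsup_norm_sq_avg_le_of_foelner F hFol hu (hFne m))
    (isBoundedUnder_of ⟨1, fun m =>
      inv_card_sq_mul_sum_sum_le_one _ fun h _ k _ => hcorrelation_le_one h k⟩)

/-- The van der Corput estimate for countable amenable groups (Bergelson–McCutcheon–Zhang):
for a family `(u_g)_{g ∈ G}` of vectors of norm at most `1` in a Hilbert space and a left
Følner sequence `(F_n)`,
`limsup_n ‖|F_n|⁻¹ ∑_{g∈F_n} u_g‖² ≤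
  limsup_m |F_m|⁻² ∑_{h,k∈F_m} limsup_n ||F_n|⁻¹ ∑_{g∈F_n} ⟪u_{hg}, u_{kg}⟫|`. -/
theorem van_der_corput_amenable {G : Type} [Group G] [Countable G] [DecidableEq G]
    {H : Type} [NormedAddCommGroup H] [InnerProductSpace ℝ H]
    (F : ℕ → Finset G) (hFne : ∀ n, (F n).Nonempty)
    (hFol : ∀ g : G, Tendsto
      (fun n => ((((F n).image (fun x => g * x)) ∆ (F n)).card : ℝ) / (F n).card)
      atTop (nhds 0))
    (u : G → H) (hu : ∀ g, ‖u g‖ ≤ 1) :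
    limsup (fun n => ‖((F n).card : ℝ)⁻¹ • ∑ g ∈ F n, u g‖ ^ 2) atTop ≤
    limsup (fun m => (((F m).card : ℝ) ^ 2)⁻¹ *
      ∑ h ∈ F m, ∑ k ∈ F m,
        limsup (fun n => |((F n).card : ℝ)⁻¹ * ∑ g ∈ F n, ⟪u (h * g), u (k * g)⟫_ℝ|) atTop)
      atTop :=
  van_der_corput_amenable_general F hFne hFol u hu
end

section
/- Let (X, μ, T₁, ..., T_d) be commuting measure-preserving G-actions of a countable amenable group G with Følner sequence (F_n), and let λ be the limit of the couplings λ_n := (1/|F_n|) Σ_{g∈F_n} of the pushforwards of μ under x ↦ (T₁^g x, T₁^gT₂^g x, ..., T₁^g⋯T_d^g x), assuming this limit exists. If i < j both lie in e ⊆ [d] and A is a measurable set invariant (mod μ) under T^g_{(i;j]} := T_{i+1}^g ⋯ T_j^g for all g ∈ G, then λ(π_i⁻¹(A) △ π_j⁻¹(A)) = 0, where π_i: X^d → X is the i-th coordinate projection. -/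
open MeasureTheory Filter
open scoped symmDiff ENNReal

/-- `blockComp T g a k` is the composition `T_{a+1}^g ∘ ⋯ ∘ T_{a+k}^g` (in 1-based labels;
the `Fin d`-indices used are `a, a+1, …, a+k-1`). -/
def blockComp {G X : Type} {d : ℕ} (T : Fin d → G → X → X) (g : G) (a : ℕ) : ℕ → X → X
  | 0 => id
  | n + 1 => fun x =>
      if h : a + n < d then blockComp T g a n (T ⟨a + n, h⟩ g x) else blockComp T g a n x

section aux
variable {G X : Type} {d : ℕ} (T : Fin d → G → X → X) (g : G)

lemma blockComp_succ_lt {a n : ℕ} (h : a + n < d) :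
    blockComp T g a (n + 1) = blockComp T g a n ∘ T ⟨a + n, h⟩ g := by
  funext x; simp [blockComp, h]

lemma blockComp_succ_ge {a n : ℕ} (h : ¬ a + n < d) :
    blockComp T g a (n + 1) = blockComp T g a n := by
  funext x; simp [blockComp, h]

lemma blockComp_add (a m : ℕ) : ∀ n, blockComp T g a (m + n)
    = blockComp T g a m ∘ blockComp T g (a + m) n := by
  intro n
  induction n with
  | zero => funext x; simp [blockComp]
  | succ n ih =>
    by_cases h : a + m + n < d
    · have h2 : a + (m + n) < d := by omega
      rw [show m + (n + 1) = (m + n) + 1 by omega, blockComp_succ_lt T g h2,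
        blockComp_succ_lt T g h, ih]
      have : (⟨a + (m + n), h2⟩ : Fin d) = ⟨a + m + n, h⟩ := by
        simp [Fin.ext_iff]; omega
      rw [this, Function.comp_assoc]
    · have h2 : ¬ a + (m + n) < d := by omega
      rw [show m + (n + 1) = (m + n) + 1 by omega, blockComp_succ_ge T g h2,
        blockComp_succ_ge T g h, ih]

lemma blockComp_mp [MeasurableSpace X] {μ : Measure X}
    (hmp : ∀ i g, MeasurePreserving (T i g) μ μ) (a : ℕ) :
    ∀ n, MeasurePreserving (blockComp T g a n) μ μ := by
  intro n
  induction n with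
  | zero => exact MeasurePreserving.id μ
  | succ n ih =>
    by_cases h : a + n < d
    · rw [blockComp_succ_lt T g h]; exact ih.comp (hmp _ g)
    · rw [blockComp_succ_ge T g h]; exact ih

lemma blockComp_comm_T
    (hcomm : ∀ i j, ∀ g h : G, i ≠ j → T i g ∘ T j h = T j h ∘ T i g)
    {a c : ℕ} (hcd : c < d) :
    ∀ n, (∀ k, a ≤ k → k < a + n → k ≠ c) →
      blockComp T g a n ∘ T ⟨c, hcd⟩ g = T ⟨c, hcd⟩ g ∘ blockComp T g a n := by
  intro n
  induction n with
  | zero => intro _; funext x; simp [blockComp]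
  | succ n ih =>
    intro hc
    by_cases h : a + n < d
    · rw [blockComp_succ_lt T g h, Function.comp_assoc,
        hcomm ⟨a + n, h⟩ ⟨c, hcd⟩ g g (by
          simp only [ne_eq, Fin.mk.injEq]
          exact hc (a + n) (by omega) (by omega)),
        ← Function.comp_assoc, ih (fun k hk hk' => hc k hk (by omega)),
        Function.comp_assoc]
    · rw [blockComp_succ_ge T g h]
      exact ih (fun k hk hk' => hc k hk (by omega))

lemma blockComp_comm_blockComp
    (hcomm : ∀ i j, ∀ g h : G, i ≠ j → T i g ∘ T j h = T j h ∘ T i g)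
    {a m b : ℕ} : ∀ n, (∀ k l, a ≤ k → k < a + m → b ≤ l → l < b + n → k ≠ l) →
      blockComp T g a m ∘ blockComp T g b n = blockComp T g b n ∘ blockComp T g a m := by
  intro n
  induction n with
  | zero => intro _; funext x; simp [blockComp]
  | succ n ih =>
    intro hd
    by_cases h : b + n < d
    · rw [blockComp_succ_lt T g h, ← Function.comp_assoc,
        ih (fun k l hk hk' hl hl' => hd k l hk hk' hl (by omega)),
        Function.comp_assoc,
        blockComp_comm_T T g hcomm h m (fun k hk hk' =>
          hd k (b + n) hk hk' (by omega) (by omega)),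
        ← Function.comp_assoc]
    · rw [blockComp_succ_ge T g h]
      exact ih (fun k l hk hk' hl hl' => hd k l hk hk' hl (by omega))

end aux

/-- Let `λ` be the limit (in the coupling topology, tested on measurable boxes) of the
couplings `λ_n = |F_n|⁻¹ ∑_{g∈F_n} (x ↦ (T₁^g x, T₁^g T₂^g x, …, T₁^g⋯T_d^g x))_* μ`.
If `i < j` and the set `A` is invariant mod `μ` under `T^g_{(i;j]} = T_{i+1}^g ⋯ T_j^g`
for every `g ∈ G`, then `λ(π_i⁻¹(A) ∆ π_j⁻¹(A)) = 0`. -/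
theorem limit_coupling_oblique_agreement {G X : Type} [Group G] [Countable G] [DecidableEq G]
    [MeasurableSpace X] (μ : Measure X) [IsProbabilityMeasure μ] {d : ℕ}
    (F : ℕ → Finset G) (hFne : ∀ n, (F n).Nonempty)
    (hFol : ∀ g : G, Tendsto
      (fun n => ((((F n).image (fun x => g * x)) ∆ (F n)).card : ℝ) / (F n).card)
      atTop (nhds 0))
    (T : Fin d → G → X → X)
    (hmp : ∀ i g, MeasurePreserving (T i g) μ μ)
    (h1 : ∀ i, T i 1 = id)
    (hmul : ∀ i, ∀ g h : G, T i (g * h) = T i g ∘ T i h)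
    (hcomm : ∀ i j, ∀ g h : G, i ≠ j → T i g ∘ T j h = T j h ∘ T i g)
    (lam : Measure (Fin d → X))
    (hconv : ∀ A : Fin d → Set X, (∀ i, MeasurableSet (A i)) →
      Tendsto (fun n => ((F n).card : ℝ≥0∞)⁻¹ *
          ∑ g ∈ F n, μ ((fun x (i : Fin d) => blockComp T g 0 (i.1 + 1) x) ⁻¹' Set.univ.pi A))
        atTop (nhds (lam (Set.univ.pi A))))
    (i j : Fin d) (hij : i < j) (A : Set X) (hA : MeasurableSet A)
    (hinv : ∀ g : G, μ ((blockComp T g (i.1 + 1) (j.1 - i.1) ⁻¹' A) ∆ A) = 0) :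
    lam (((fun ω : Fin d → X => ω i) ⁻¹' A) ∆ ((fun ω : Fin d → X => ω j) ⁻¹' A)) = 0 := by
  classical
  have hijv : i.1 < j.1 := hij
  -- key pointwise null statement
  have key : ∀ g : G,
      μ ((blockComp T g 0 (i.1 + 1) ⁻¹' A) ∆ (blockComp T g 0 (j.1 + 1) ⁻¹' A)) = 0 := by
    intro g
    have hB := blockComp_mp T g hmp (i.1 + 1) (j.1 - i.1) (μ := μ)
    have hSi := blockComp_mp T g hmp 0 (i.1 + 1) (μ := μ)
    have hsplit : blockComp T g 0 (j.1 + 1)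
        = blockComp T g 0 (i.1 + 1) ∘ blockComp T g (i.1 + 1) (j.1 - i.1) := by
      have h := blockComp_add T g 0 (i.1 + 1) (j.1 - i.1)
      rw [show (i.1 + 1) + (j.1 - i.1) = j.1 + 1 by omega] at h
      rw [show (0 : ℕ) + (i.1 + 1) = i.1 + 1 by omega] at h
      exact h
    have hcB : blockComp T g 0 (i.1 + 1) ∘ blockComp T g (i.1 + 1) (j.1 - i.1)
        = blockComp T g (i.1 + 1) (j.1 - i.1) ∘ blockComp T g 0 (i.1 + 1) := by
      refine blockComp_comm_blockComp T g hcomm _ ?_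
      intro k l hk hk' hl hl'; omega
    have hpre : blockComp T g 0 (j.1 + 1) ⁻¹' A
        = blockComp T g 0 (i.1 + 1) ⁻¹' (blockComp T g (i.1 + 1) (j.1 - i.1) ⁻¹' A) := by
      rw [hsplit, hcB]; rfl
    rw [hpre, ← Set.preimage_symmDiff,
      hSi.measure_preimage ((hA.symmDiff (hB.measurable hA)).nullMeasurableSet),
      symmDiff_comm]
    exact hinv g
  -- the two boxes
  have main : ∀ B : Fin d → Set X, (∀ k, MeasurableSet (B k)) →
      ((B i = A ∧ B j = Aᶜ) ∨ (B i = Aᶜ ∧ B j = A)) →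
      lam (Set.univ.pi B) = 0 := by
    intro B hBm hBij
    have hconv1 := hconv B hBm
    have hz : (fun n => ((F n).card : ℝ≥0∞)⁻¹ *
        ∑ g ∈ F n, μ ((fun x (k : Fin d) => blockComp T g 0 (k.1 + 1) x) ⁻¹' Set.univ.pi B))
        = fun _ => 0 := by
      funext n
      rw [Finset.sum_eq_zero, mul_zero]
      intro g _
      refine measure_mono_null ?_ (key g)
      intro x hx
      simp only [Set.mem_preimage, Set.mem_pi, Set.mem_univ, forall_true_left] at hx
      have hxi := hx i; have hxj := hx j
      rw [Set.mem_symmDiff]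
      rcases hBij with ⟨hBi, hBj⟩ | ⟨hBi, hBj⟩
      · rw [hBi] at hxi; rw [hBj] at hxj
        exact Or.inl ⟨hxi, hxj⟩
      · rw [hBi] at hxi; rw [hBj] at hxj
        exact Or.inr ⟨hxj, hxi⟩
    rw [hz] at hconv1
    exact tendsto_nhds_unique hconv1 tendsto_const_nhds
  set B1 : Fin d → Set X := fun k => if k = i then A else if k = j then Aᶜ else Set.univ with hB1
  set B2 : Fin d → Set X := fun k => if k = j then A else if k = i then Aᶜ else Set.univ with hB2
  have hne : j ≠ i := (Fin.lt_iff_val_lt_val.mp hij).ne'  |> fun h => Fin.ne_of_val_ne h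
  have hz1 : lam (Set.univ.pi B1) = 0 := by
    refine main B1 ?_ (Or.inl ⟨?_, ?_⟩)
    · intro k; simp only [hB1]; split_ifs <;>
        first | exact hA | exact hA.compl | exact MeasurableSet.univ
    · simp [hB1]
    · simp [hB1, hne]
  have hz2 : lam (Set.univ.pi B2) = 0 := by
    refine main B2 ?_ (Or.inr ⟨?_, ?_⟩)
    · intro k; simp only [hB2]; split_ifs <;>
        first | exact hA | exact hA.compl | exact MeasurableSet.univ
    · simp [hB2, hne.symm]
    · simp [hB2]
  have hun : (((fun ω : Fin d → X => ω i) ⁻¹' A) ∆ ((fun ω : Fin d → X => ω j) ⁻¹' A))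
      ⊆ Set.univ.pi B1 ∪ Set.univ.pi B2 := by
    intro ω hω
    rw [Set.mem_symmDiff] at hω
    rcases hω with ⟨h1, h2⟩ | ⟨h1, h2⟩
    · left
      intro k _
      simp only [hB1]
      split_ifs with e1 e2
      · rwa [e1]
      · rw [e2]; exact h2
      · trivial
    · right
      intro k _
      simp only [hB2]
      split_ifs with e1 e2
      · rwa [e1]
      · rw [e2]; exact h2
      · trivial
  exact measure_mono_null hun (measure_union_null hz1 hz2)
end
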